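/- arXiv:2409.01350 — 2 statements merged into one kernel-verified Lean document; each statement's English description precedes it below -/
import Mathlib

section
/- Suppose L₁ ⊊ L₂ ⊂ V are two G-stable Λ-lattices, free of rank 2, with L₁ ∩ V_1 = L₂ ∩ V_1. Then L₁ = (L₁ ∩ V_1) ⊕ c·(L₁ ∩ V_1) (so L₁ is isomorphic to the induced module Ind_H^G(Λ(ψ))), and L₂/L₁ ≅ Λ/TΛ. -/
/-!
Let `B ⊆ F` be the set of first coordinates of `L₁ ∩ V₁ = L₂ ∩ V₁`. Since `c` swaps the
coordinates, `B × B ⊆ L₁`; and for `v ∈ L₂`, `h ∈ H` one has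
`ρ h v - ψ^c(h) v = ((ψ(h) - ψ^c(h)) v₁, 0)`, so `T L₂ ⊆ B × B` because these differences generate
`(T)`. The first coordinates of two vectors `v, v' ∈ L₂` are `Λ`-dependent; cancelling the common
power of `T` in a relation and reducing it modulo `T` gives constants `a, b ∈ ℤ_p`, not both zero,
with `a v - b v' ∈ B × B`. As `L₁` is free and `T` is a prime not dividing `a ≠ 0`, `a v ∈ L₁`
and `T v ∈ L₁` force `v ∈ L₁`. Applied with `v' ∈ L₂ ∖ L₁` this gives `L₁ = B × B`, and it makes
`L₂/L₁` a nonzero finitely generated module killed by `T`, torsion-free of rank at most one over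
the valuation ring `ℤ_p`: a cyclic module with annihilator `(T)`.
-/

open PowerSeries

theorem Submodule.mem_of_smul_mem_of_smul_mem {R M : Type*} [CommRing R] [AddCommGroup M]
    [Module R M] {L : Submodule R M} [Module.Free R L] {r s : R} (hr : Prime r) (hrs : ¬r ∣ s)
    (hrM : IsSMulRegular M r) {v : M} (hs : s • v ∈ L) (hrv : r • v ∈ L) : v ∈ L := by
  classical
  let b := Module.Free.chooseBasis R L
  let y : L := ⟨r • v, hrv⟩
  have hdvd : ∀ i, r ∣ b.repr y i := by
    intro i
    have hxy : r • (⟨s • v, hs⟩ : L) = s • y := Subtype.ext (smul_comm r s v)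
    have := congrArg (fun z => b.repr z i) hxy
    simp only [map_smul, Finsupp.smul_apply, smul_eq_mul] at this
    exact (hr.dvd_or_dvd ⟨_, this.symm⟩).resolve_left hrs
  choose q hq using hdvd
  let z : L := ∑ i ∈ (b.repr y).support, q i • b i
  have hz : r • z = y := by
    conv_rhs => rw [← b.linearCombination_repr y, Finsupp.linearCombination_apply, Finsupp.sum]
    rw [Finset.smul_sum]
    exact Finset.sum_congr rfl fun i _ => by rw [smul_smul, ← hq]
  have hzv : (z : M) = v := hrM (congrArg Subtype.val hz)
  exact hzv ▸ z.2

theorem Submodule.isPrincipal_of_fg_of_mem_span_singleton_or {R M : Type*} [Semiring R]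
    [AddCommMonoid M] [Module R M] {N : Submodule R M} (hN : N.FG)
    (h : ∀ x ∈ N, ∀ y ∈ N, x ∈ R ∙ y ∨ y ∈ R ∙ x) : N.IsPrincipal := by
  suffices ∀ P : Submodule R M, P.FG → P ≤ N → P.IsPrincipal from this N hN le_rfl
  intro P hP
  induction P, hP using Submodule.fg_induction with
  | singleton x => exact fun _ => ⟨x, rfl⟩
  | sup N₁ N₂ _ _ ih₁ ih₂ =>
    intro hle
    obtain ⟨x, rfl⟩ := ih₁ (le_sup_left.trans hle)
    obtain ⟨y, rfl⟩ := ih₂ (le_sup_right.trans hle)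
    have hx : x ∈ N := hle (Submodule.mem_sup_left (Submodule.mem_span_singleton_self x))
    have hy : y ∈ N := hle (Submodule.mem_sup_right (Submodule.mem_span_singleton_self y))
    rcases h x hx y hy with hxy | hyx
    · exact ⟨y, sup_eq_right.mpr ((Submodule.span_singleton_le_iff_mem _ _).mpr hxy)⟩
    · exact ⟨x, sup_eq_left.mpr ((Submodule.span_singleton_le_iff_mem _ _).mpr hyx)⟩

theorem IsFractionRing.exists_smul_eq_smul {R F : Type*} [CommRing R] [Nontrivial R] [Field F]
    [Algebra R F] [IsFractionRing R F] (x y : F) :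
    ∃ l m : R, (l ≠ 0 ∨ m ≠ 0) ∧ l • x = m • y := by
  by_cases hx : x = 0
  · exact ⟨1, 0, Or.inl one_ne_zero, by simp [hx]⟩
  obtain ⟨⟨r, s⟩, hrs⟩ := IsLocalization.surj (nonZeroDivisors R) (y / x)
  refine ⟨r, s, Or.inr (nonZeroDivisors.coe_ne_zero s), ?_⟩
  rw [Algebra.smul_def, Algebra.smul_def]
  field_simp at hrs
  linear_combination -hrs

namespace PowerSeries

section

variable {A M : Type*} [CommRing A] [AddCommGroup M] [Module A⟦X⟧ M]

theorem exists_constantCoeff_ne_zero_smul_eq_smul (hM : IsSMulRegular M (X : A⟦X⟧))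
    {x y : M} {l m : A⟦X⟧} (hlm : l ≠ 0 ∨ m ≠ 0) (h : l • x = m • y) :
    ∃ l' m' : A⟦X⟧, (constantCoeff l' ≠ 0 ∨ constantCoeff m' ≠ 0) ∧ l' • x = m' • y := by
  classical
  have hex : ∃ n, coeff n l ≠ 0 ∨ coeff n m ≠ 0 := by
    by_contra! H
    exact hlm.elim (· (ext fun n => (H n).1)) (· (ext fun n => (H n).2))
  obtain ⟨n, hn, hlow⟩ : ∃ n, (coeff n l ≠ 0 ∨ coeff n m ≠ 0) ∧
      ∀ k < n, coeff k l = 0 ∧ coeff k m = 0 :=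
    ⟨Nat.find hex, Nat.find_spec hex, fun k hk => by simpa using Nat.find_min hex hk⟩
  obtain ⟨l', rfl⟩ := X_pow_dvd_iff.mpr fun k hk => (hlow k hk).1
  obtain ⟨m', rfl⟩ := X_pow_dvd_iff.mpr fun k hk => (hlow k hk).2
  refine ⟨l', m', ?_, (hM.pow n) ?_⟩
  · simpa [coeff_X_pow_mul'] using hn
  · simpa only [smul_smul] using h

theorem sub_C_constantCoeff_smul_mem {N : Submodule A⟦X⟧ M} {x : M} (hx : (X : A⟦X⟧) • x ∈ N)
    (f : A⟦X⟧) : f • x - C (constantCoeff f) • x ∈ N := by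
  obtain ⟨k, hk⟩ := X_dvd_iff.mpr (show constantCoeff (f - C (constantCoeff f)) = 0 by simp)
  rw [← sub_smul, hk, mul_comm, mul_smul]
  exact N.smul_mem k hx

theorem torsionOf_eq_span_X {g : M} (hX : (X : A⟦X⟧) • g = 0) (hC : ∀ a : A, C a • g = 0 → a = 0) :
    Ideal.torsionOf A⟦X⟧ M g = Ideal.span {X} := by
  ext f
  rw [Ideal.mem_torsionOf_iff, Ideal.mem_span_singleton, X_dvd_iff]
  constructor
  · intro hf
    have h := sub_C_constantCoeff_smul_mem (N := ⊥) (by simpa using hX) f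
    rw [Submodule.mem_bot, hf, zero_sub, neg_eq_zero] at h
    exact hC _ h
  · intro hf
    obtain ⟨k, rfl⟩ := X_dvd_iff.mpr hf
    rw [mul_comm, mul_smul, hX, smul_zero]

theorem mem_of_C_smul_mem_of_X_smul_mem [IsDomain A] (hM : IsSMulRegular M (X : A⟦X⟧))
    {L : Submodule A⟦X⟧ M} [Module.Free A⟦X⟧ L] {a : A} (ha : a ≠ 0) {v : M}
    (hCv : C a • v ∈ L) (hXv : (X : A⟦X⟧) • v ∈ L) : v ∈ L :=
  L.mem_of_smul_mem_of_smul_mem X_prime (by rwa [X_dvd_iff, constantCoeff_C]) hM hCv hXv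

end

section

variable {A M : Type*} [CommRing A] [IsDomain A] [ValuationRing A] [AddCommGroup M]
  [Module A⟦X⟧ M] {N : Submodule A⟦X⟧ M}

theorem mem_span_singleton_or_of_C_smul_eq
    (htf : ∀ a : A, a ≠ 0 → ∀ q ∈ N, C a • q = 0 → q = 0) {q q' : M} (hq : q ∈ N)
    (hq' : q' ∈ N) {a b : A} (hab : a ≠ 0 ∨ b ≠ 0) (h : C a • q = C b • q') :
    q ∈ A⟦X⟧ ∙ q' ∨ q' ∈ A⟦X⟧ ∙ q := by
  have key : ∀ {x y : M} {a k : A}, x ∈ N → y ∈ N → a ≠ 0 → C a • x = C (a * k) • y →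
      x ∈ A⟦X⟧ ∙ y := by
    intro x y a k hx hy ha hxy
    have hdiff := htf a ha _ (N.sub_mem hx (N.smul_mem (C k) hy))
      (by rw [smul_sub, hxy, map_mul, mul_smul, sub_self])
    exact Submodule.mem_span_singleton.mpr ⟨C k, (sub_eq_zero.mp hdiff).symm⟩
  rcases ValuationRing.dvd_total a b with ⟨k, rfl⟩ | ⟨k, rfl⟩
  · exact Or.inl (key hq hq' (fun ha => hab.elim (· ha) (· (by simp [ha]))) h)
  · exact Or.inr (key hq' hq (fun hb => hab.elim (· (by simp [hb])) (· hb)) h.symm)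

theorem nonempty_linearEquiv_quotient_span_X (hN : N.FG) (hne : N ≠ ⊥)
    (hX : ∀ q ∈ N, (X : A⟦X⟧) • q = 0)
    (htf : ∀ a : A, a ≠ 0 → ∀ q ∈ N, C a • q = 0 → q = 0)
    (hdep : ∀ q ∈ N, ∀ q' ∈ N, ∃ a b : A, (a ≠ 0 ∨ b ≠ 0) ∧ C a • q = C b • q') :
    Nonempty (N ≃ₗ[A⟦X⟧] A⟦X⟧ ⧸ Ideal.span {(X : A⟦X⟧)}) := by
  obtain ⟨g, hg⟩ := (Submodule.isPrincipal_of_fg_of_mem_span_singleton_or hN fun q hq q' hq' => by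
    obtain ⟨a, b, hab, h⟩ := hdep q hq q' hq'
    exact mem_span_singleton_or_of_C_smul_eq htf hq hq' hab h).principal
  have hgN : g ∈ N := hg ▸ Submodule.mem_span_singleton_self g
  have hg0 : g ≠ 0 := fun h => hne (by rw [hg, h, Submodule.span_zero_singleton])
  have htors := torsionOf_eq_span_X (hX g hgN) fun a ha =>
    by_contra fun ha0 => hg0 (htf a ha0 g hgN ha)
  exact ⟨(LinearEquiv.ofEq _ _ hg).trans
    ((Ideal.quotTorsionOfEquivSpanSingleton A⟦X⟧ M g).symm.trans
      (Submodule.quotEquivOfEq _ _ htors))⟩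

end

end PowerSeries

section Lattice

variable {A M : Type*} [CommRing A] [AddCommGroup M] [Module A⟦X⟧ M]

/-- Modelled on `L ⊆ V`: the swap is the action of `c`, and `B × 0` is `L ∩ V₁`. -/
structure IsAdaptedLattice (B : Submodule A⟦X⟧ M) (L : Submodule A⟦X⟧ (M × M)) : Prop where
  swap_mem : ∀ v ∈ L, v.swap ∈ L
  mk_zero_mem_iff : ∀ t : M, (t, 0) ∈ L ↔ t ∈ B
  X_smul_mem : ∀ v ∈ L, (X : A⟦X⟧) • v ∈ B.prod B

namespace IsAdaptedLattice

variable {B : Submodule A⟦X⟧ M} {L : Submodule A⟦X⟧ (M × M)}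

theorem prod_le (hL : IsAdaptedLattice B L) : B.prod B ≤ L := by
  rintro ⟨s, t⟩ ⟨hs, ht⟩
  have hs' := (hL.mk_zero_mem_iff s).mpr hs
  have ht' := hL.swap_mem _ ((hL.mk_zero_mem_iff t).mpr ht)
  simpa using L.add_mem hs' ht'

theorem mem_prod_of_fst_mem (hL : IsAdaptedLattice B L) {v : M × M} (hv : v ∈ L)
    (hv₁ : v.1 ∈ B) : v ∈ B.prod B := by
  have h0 : ((0 : M), v.2) ∈ L := by
    have hdiff : v - (v.1, 0) = ((0 : M), v.2) := Prod.ext (sub_self _) (sub_zero _)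
    exact hdiff ▸ L.sub_mem hv (hL.prod_le ⟨hv₁, B.zero_mem⟩)
  exact ⟨hv₁, (hL.mk_zero_mem_iff _).mp (hL.swap_mem _ h0)⟩

end IsAdaptedLattice

end Lattice

section FractionField

variable {A F : Type*} [CommRing A] [IsDomain A] [Field F] [Algebra A⟦X⟧ F]
  [IsFractionRing A⟦X⟧ F]

namespace IsAdaptedLattice

variable {B : Submodule A⟦X⟧ F} {L L₁ L₂ : Submodule A⟦X⟧ (F × F)}

theorem exists_C_smul_sub_C_smul_mem (hL : IsAdaptedLattice B L) {v v' : F × F} (hv : v ∈ L)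
    (hv' : v' ∈ L) : ∃ a b : A, (a ≠ 0 ∨ b ≠ 0) ∧ C a • v - C b • v' ∈ B.prod B := by
  obtain ⟨l, m, hlm, h⟩ := IsFractionRing.exists_smul_eq_smul (R := A⟦X⟧) v.1 v'.1
  obtain ⟨l, m, hlm, h⟩ :=
    exists_constantCoeff_ne_zero_smul_eq_smul (.of_ne_zero X_ne_zero) hlm h
  refine ⟨constantCoeff l, constantCoeff m, hlm, ?_⟩
  have hrel : l • v - m • v' ∈ B.prod B :=
    hL.mem_prod_of_fst_mem (L.sub_mem (L.smul_mem l hv) (L.smul_mem m hv')) (by simp [h])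
  have hl := sub_C_constantCoeff_smul_mem (hL.X_smul_mem v hv) l
  have hm := sub_C_constantCoeff_smul_mem (hL.X_smul_mem v' hv') m
  have hsplit : C (constantCoeff l) • v - C (constantCoeff m) • v' = (l • v - m • v') -
      (l • v - C (constantCoeff l) • v) + (m • v' - C (constantCoeff m) • v') := by
    abel
  rw [hsplit]
  exact add_mem (sub_mem hrel hl) hm

theorem mem_of_C_smul_mem (hL : IsAdaptedLattice B L) [Module.Free A⟦X⟧ L] {a : A} (ha : a ≠ 0)
    {t : F} (hCt : C a • t ∈ B) (hXt : (X : A⟦X⟧) • t ∈ B) : t ∈ B := by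
  rw [← hL.mk_zero_mem_iff] at hCt hXt ⊢
  exact mem_of_C_smul_mem_of_X_smul_mem (.of_ne_zero X_ne_zero) ha
    (by simpa using hCt) (by simpa using hXt)

theorem eq_prod_of_lt (hL₁ : IsAdaptedLattice B L₁) (hL₂ : IsAdaptedLattice B L₂)
    [Module.Free A⟦X⟧ L₁] (hlt : L₁ < L₂) : L₁ = B.prod B := by
  refine le_antisymm (fun v hv => ?_) hL₁.prod_le
  obtain ⟨v', hv'₂, hv'₁⟩ := SetLike.exists_of_lt hlt
  obtain ⟨a, b, hab, hmem⟩ := hL₂.exists_C_smul_sub_C_smul_mem (hlt.le hv) hv'₂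
  have hb : b = 0 := by
    by_contra hb
    refine hv'₁ (mem_of_C_smul_mem_of_X_smul_mem (.of_ne_zero X_ne_zero) hb ?_
      (hL₁.prod_le (hL₂.X_smul_mem v' hv'₂)))
    simpa using L₁.sub_mem (L₁.smul_mem (C a) hv) (hL₁.prod_le hmem)
  subst hb
  have ha : a ≠ 0 := by simpa using hab
  have hCv : C a • v ∈ B.prod B := by simpa using hmem
  have hXv := hL₁.X_smul_mem v hv
  exact ⟨hL₁.mem_of_C_smul_mem ha hCv.1 hXv.1, hL₁.mem_of_C_smul_mem ha hCv.2 hXv.2⟩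

theorem nonempty_map_mkQ_linearEquiv [ValuationRing A] (hL₁ : IsAdaptedLattice B L₁)
    (hL₂ : IsAdaptedLattice B L₂) [Module.Free A⟦X⟧ L₁] (hfg : L₂.FG) (hlt : L₁ < L₂) :
    Nonempty (L₂.map L₁.mkQ ≃ₗ[A⟦X⟧] A⟦X⟧ ⧸ Ideal.span {(X : A⟦X⟧)}) := by
  have hsat : ∀ a : A, a ≠ 0 → ∀ v ∈ L₂, C a • v ∈ L₁ → v ∈ L₁ := fun a ha v hv hCv =>
    mem_of_C_smul_mem_of_X_smul_mem (.of_ne_zero X_ne_zero) ha hCv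
      (hL₁.prod_le (hL₂.X_smul_mem v hv))
  refine nonempty_linearEquiv_quotient_span_X (hfg.map _) ?_ ?_ ?_ ?_
  · obtain ⟨v', hv'₂, hv'₁⟩ := SetLike.exists_of_lt hlt
    intro h
    have := h ▸ Submodule.mem_map_of_mem (f := L₁.mkQ) hv'₂
    exact hv'₁ ((Submodule.Quotient.mk_eq_zero L₁).mp ((Submodule.mem_bot _).mp this))
  · rintro _ ⟨v, hv, rfl⟩
    rw [← map_smul, Submodule.mkQ_apply, Submodule.Quotient.mk_eq_zero]
    exact hL₁.prod_le (hL₂.X_smul_mem v hv)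
  · rintro a ha _ ⟨v, hv, rfl⟩ h
    rw [← map_smul, Submodule.mkQ_apply, Submodule.Quotient.mk_eq_zero] at h
    rw [Submodule.mkQ_apply, Submodule.Quotient.mk_eq_zero]
    exact hsat a ha v hv h
  · rintro _ ⟨v, hv, rfl⟩ _ ⟨v', hv', rfl⟩
    obtain ⟨a, b, hab, hmem⟩ := hL₂.exists_C_smul_sub_C_smul_mem hv hv'
    refine ⟨a, b, hab, ?_⟩
    rw [← map_smul, ← map_smul, Submodule.mkQ_apply, Submodule.mkQ_apply, Submodule.Quotient.eq]
    exact hL₁.prod_le hmem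

end IsAdaptedLattice

end FractionField

section Representation

variable {A M G : Type*} [CommRing A] [AddCommGroup M] [Module A⟦X⟧ M] [Group G]
  {H : Subgroup G} {ψ ψc : H →* A⟦X⟧ˣ} {ρ : Representation A⟦X⟧ G (M × M)}
  {L : Submodule A⟦X⟧ (M × M)}

theorem X_smul_fst_mk_zero_mem
    (hT : Ideal.span (Set.range fun h : H => ((ψ h : A⟦X⟧) - (ψc h : A⟦X⟧))) = Ideal.span {X})
    (hρH : ∀ (h : H) (x : M × M), ρ (h : G) x = ((ψ h : A⟦X⟧) • x.1, (ψc h : A⟦X⟧) • x.2))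
    (hL : ∀ (g : G) (x : M × M), x ∈ L → ρ g x ∈ L) {v : M × M} (hv : v ∈ L) :
    ((X : A⟦X⟧) • v.1, (0 : M)) ∈ L := by
  let I : Ideal A⟦X⟧ := L.comap ((LinearMap.inl A⟦X⟧ M M) ∘ₗ LinearMap.toSpanSingleton A⟦X⟧ M v.1)
  suffices Ideal.span {X} ≤ I from this (Ideal.mem_span_singleton_self X)
  rw [← hT, Ideal.span_le]
  rintro _ ⟨h, rfl⟩
  have hdiff : ρ (h : G) v - (ψc h : A⟦X⟧) • v = (((ψ h : A⟦X⟧) - ψc h) • v.1, 0) := by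
    rw [hρH]; ext <;> simp [sub_smul]
  simpa [I, ← hdiff] using L.sub_mem (hL h v hv) (L.smul_mem _ hv)

theorem isAdaptedLattice_of_stable {c : G} {B : Submodule A⟦X⟧ M}
    (hT : Ideal.span (Set.range fun h : H => ((ψ h : A⟦X⟧) - (ψc h : A⟦X⟧))) = Ideal.span {X})
    (hρH : ∀ (h : H) (x : M × M), ρ (h : G) x = ((ψ h : A⟦X⟧) • x.1, (ψc h : A⟦X⟧) • x.2))
    (hρc : ∀ x : M × M, ρ c x = (x.2, x.1))
    (hL : ∀ (g : G) (x : M × M), x ∈ L → ρ g x ∈ L) (hB : ∀ t : M, (t, 0) ∈ L ↔ t ∈ B) :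
    IsAdaptedLattice B L := by
  have hswap : ∀ v ∈ L, v.swap ∈ L := fun v hv => by
    simpa only [Prod.swap, hρc] using hL c v hv
  refine ⟨hswap, hB, fun v hv => ⟨?_, ?_⟩⟩
  · exact (hB _).mp (X_smul_fst_mk_zero_mem hT hρH hL hv)
  · exact (hB _).mp (X_smul_fst_mk_zero_mem hT hρH hL (hswap v hv))

end Representation

theorem stmt7_general (p : ℕ) [Fact p.Prime]
    (F : Type*) [Field F] [Algebra (PowerSeries ℤ_[p]) F]
    [IsFractionRing (PowerSeries ℤ_[p]) F]
    {G : Type*} [Group G] (H : Subgroup G)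
    (c : G)
    (ψ ψc : H →* (PowerSeries ℤ_[p])ˣ)
    (hT : Ideal.span (Set.range fun h : H =>
        ((ψ h : PowerSeries ℤ_[p]) - (ψc h : PowerSeries ℤ_[p])))
      = Ideal.span {(X : PowerSeries ℤ_[p])})
    (ρ : Representation (PowerSeries ℤ_[p]) G (F × F))
    (hρH : ∀ (h : H) (x : F × F),
      ρ (h : G) x = ((ψ h : PowerSeries ℤ_[p]) • x.1, (ψc h : PowerSeries ℤ_[p]) • x.2))
    (hρc : ∀ x : F × F, ρ c x = (x.2, x.1))
    (L₁ L₂ : Submodule (PowerSeries ℤ_[p]) (F × F))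
    (hL1free : Module.Free (PowerSeries ℤ_[p]) L₁)
    (hL1stab : ∀ (g : G) (x : F × F), x ∈ L₁ → ρ g x ∈ L₁)
    (hL2free : Module.Free (PowerSeries ℤ_[p]) L₂)
    (hL2rank : Module.rank (PowerSeries ℤ_[p]) L₂ = 2)
    (hL2stab : ∀ (g : G) (x : F × F), x ∈ L₂ → ρ g x ∈ L₂)
    (hlt : L₁ < L₂)
    (hV₁ : L₁ ⊓ LinearMap.ker (LinearMap.snd (PowerSeries ℤ_[p]) F F)
      = L₂ ⊓ LinearMap.ker (LinearMap.snd (PowerSeries ℤ_[p]) F F)) :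
    let V₁ : Submodule (PowerSeries ℤ_[p]) (F × F) :=
      LinearMap.ker (LinearMap.snd (PowerSeries ℤ_[p]) F F)
    (L₁ = (L₁ ⊓ V₁) ⊔ (L₁ ⊓ V₁).map (ρ c) ∧ Disjoint (L₁ ⊓ V₁) ((L₁ ⊓ V₁).map (ρ c))) ∧
    Nonempty ((L₂.map L₁.mkQ) ≃ₗ[PowerSeries ℤ_[p]]
      (PowerSeries ℤ_[p] ⧸ Ideal.span {(X : PowerSeries ℤ_[p])})) := by
  intro V₁
  let B := L₁.comap (LinearMap.inl _ F F)
  have hB₂ (t : F) : (t, 0) ∈ L₂ ↔ t ∈ B := by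
    simpa [V₁, B] using (SetLike.ext_iff.mp hV₁ (t, 0)).symm
  have hL₁ := isAdaptedLattice_of_stable (B := B) hT hρH hρc hL1stab fun _ => Iff.rfl
  have hL₂ := isAdaptedLattice_of_stable hT hρH hρc hL2stab hB₂
  have hfg : L₂.FG := Module.Finite.iff_fg.mp (Module.finite_of_rank_eq_nat (n := 2) hL2rank)
  have hV₁B : L₁ ⊓ V₁ = B.prod ⊥ := by
    ext ⟨s, t⟩
    simp only [Submodule.mem_inf, Submodule.mem_prod, Submodule.mem_bot, V₁, LinearMap.mem_ker,
      LinearMap.snd_apply, Submodule.mem_comap, LinearMap.inl_apply, B]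
    exact ⟨fun ⟨hst, ht⟩ => ⟨ht ▸ hst, ht⟩, fun ⟨hs, ht⟩ => ⟨ht ▸ hs, ht⟩⟩
  have hcB : (B.prod ⊥).map (ρ c) = (⊥ : Submodule _ F).prod B := by
    ext ⟨s, t⟩
    simp only [Submodule.mem_map, Submodule.mem_prod, Submodule.mem_bot, hρc, Prod.exists,
      Prod.mk.injEq]
    exact ⟨fun ⟨_, _, ⟨hs, ht⟩, hx, hy⟩ => ⟨hx ▸ ht, hy ▸ hs⟩,
      fun ⟨hs, ht⟩ => ⟨t, s, ⟨ht, hs⟩, rfl, rfl⟩⟩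
  rw [hV₁B, hcB, Submodule.prod_sup_prod, bot_sup_eq, sup_bot_eq, disjoint_iff,
    Submodule.prod_inf_prod, inf_bot_eq, bot_inf_eq, Submodule.prod_bot]
  exact ⟨⟨hL₁.eq_prod_of_lt hL₂ hlt, rfl⟩, hL₁.nonempty_map_mkQ_linearEquiv hL₂ hfg hlt⟩

/-- Same setting as before (`Λ = ℤ_p[[T]]` with fraction field `F`; `G` with index-2 subgroup
`H` and `c ∈ G∖H`, `c² = 1`; `ψ : H → Λ^×` whose differences with its conjugate `ψ^c`
generate the ideal `(T)`; `V = F·e₁ ⊕ F·e₂` with `H` acting by `diag(ψ, ψ^c)` and `c`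
swapping; `V₁ = F·e₁`).  Suppose `L₁ ⊊ L₂ ⊂ V` are two `G`-stable rank-2 `Λ`-lattices with
`L₁ ∩ V₁ = L₂ ∩ V₁`.  Then `L₁ = (L₁ ∩ V₁) ⊕ c·(L₁ ∩ V₁)` (so `L₁` is isomorphic to the
induced module `Ind_H^G(Λ(ψ))`), and `L₂/L₁ ≅ Λ/TΛ`; in particular the inclusion
`L₁ ⊆ L₂` identifies `L₁/(L₁ ∩ V₁)` with `T·(L₂/(L₂ ∩ V₁))`. -/
theorem stmt7 (p : ℕ) [Fact p.Prime]
    (F : Type*) [Field F] [Algebra (PowerSeries ℤ_[p]) F]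
    [IsFractionRing (PowerSeries ℤ_[p]) F]
    {G : Type*} [Group G] (H : Subgroup G) (hidx : H.index = 2)
    (c : G) (hc : c ∉ H) (hc2 : c * c = 1)
    (ψ ψc : H →* (PowerSeries ℤ_[p])ˣ)
    (hψc : ∀ h : H, ∃ hm : c⁻¹ * (h : G) * c ∈ H, ψc h = ψ ⟨c⁻¹ * (h : G) * c, hm⟩)
    (hT : Ideal.span (Set.range fun h : H =>
        ((ψ h : PowerSeries ℤ_[p]) - (ψc h : PowerSeries ℤ_[p])))
      = Ideal.span {(X : PowerSeries ℤ_[p])})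
    (ρ : Representation (PowerSeries ℤ_[p]) G (F × F))
    (hρH : ∀ (h : H) (x : F × F),
      ρ (h : G) x = ((ψ h : PowerSeries ℤ_[p]) • x.1, (ψc h : PowerSeries ℤ_[p]) • x.2))
    (hρc : ∀ x : F × F, ρ c x = (x.2, x.1))
    (L₁ L₂ : Submodule (PowerSeries ℤ_[p]) (F × F))
    (hL1free : Module.Free (PowerSeries ℤ_[p]) L₁)
    (hL1rank : Module.rank (PowerSeries ℤ_[p]) L₁ = 2)
    (hL1stab : ∀ (g : G) (x : F × F), x ∈ L₁ → ρ g x ∈ L₁)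
    (hL2free : Module.Free (PowerSeries ℤ_[p]) L₂)
    (hL2rank : Module.rank (PowerSeries ℤ_[p]) L₂ = 2)
    (hL2stab : ∀ (g : G) (x : F × F), x ∈ L₂ → ρ g x ∈ L₂)
    (hlt : L₁ < L₂)
    (hV₁ : L₁ ⊓ LinearMap.ker (LinearMap.snd (PowerSeries ℤ_[p]) F F)
      = L₂ ⊓ LinearMap.ker (LinearMap.snd (PowerSeries ℤ_[p]) F F)) :
    let V₁ : Submodule (PowerSeries ℤ_[p]) (F × F) :=
      LinearMap.ker (LinearMap.snd (PowerSeries ℤ_[p]) F F)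
    (L₁ = (L₁ ⊓ V₁) ⊔ (L₁ ⊓ V₁).map (ρ c) ∧ Disjoint (L₁ ⊓ V₁) ((L₁ ⊓ V₁).map (ρ c))) ∧
    Nonempty ((L₂.map L₁.mkQ) ≃ₗ[PowerSeries ℤ_[p]]
      (PowerSeries ℤ_[p] ⧸ Ideal.span {(X : PowerSeries ℤ_[p])})) :=
  stmt7_general p F H c ψ ψc hT ρ hρH hρc L₁ L₂ hL1free hL1stab hL2free hL2rank hL2stab hlt hV₁
end

section
/- Let ℓ be an odd prime and let 𝔞 be a nonzero fractional ideal of a number field K whose class in Cl(K) has order exactly ℓ, and suppose 𝔞^ℓ = (α) for some α ∈ K^×. Then α is not an ℓ-th power in K(μ_ℓ)^×, where K(μ_ℓ) is the field obtained by adjoining a primitive ℓ-th root of unity. -/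
/-!
Since `[K(μ_ℓ) : K] ≤ φ(ℓ) = ℓ - 1` is coprime to `ℓ`, taking norms turns `γ ^ ℓ = α` into
`N(γ) ^ ℓ = α ^ [K(μ_ℓ) : K]`, and a Bézout combination then makes `α = w ^ ℓ` with `w ∈ K`.
Hence `𝔞 ^ ℓ = (w) ^ ℓ`, and since the group of fractional ideals of a Dedekind domain is
torsion-free (compare valuations), `𝔞 = (w)` would be principal.
-/

open NumberField

namespace FractionalIdeal

variable {R : Type*} [CommRing R] [IsDedekindDomain R] {K : Type*} [Field K] [Algebra R K]
  [IsFractionRing R K]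

theorem pow_left_injective {n : ℕ} (hn : n ≠ 0) :
    Function.Injective (fun I : FractionalIdeal (nonZeroDivisors R) K => I ^ n) := by
  intro I J (h : I ^ n = J ^ n)
  by_cases hJ : J = 0
  · rwa [hJ, zero_pow hn, pow_eq_zero_iff hn, ← hJ] at h
  have hI : I ≠ 0 := by
    rintro rfl
    exact hJ ((pow_eq_zero_iff hn).mp (by rw [← h, zero_pow hn]))
  have hcount (v : IsDedekindDomain.HeightOneSpectrum R) : count K v I = count K v J := by
    have := count_pow K v n I
    rw [h, count_pow] at this
    exact (mul_right_injective₀ (Int.natCast_ne_zero.mpr hn) this).symm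
  rw [← finprod_heightOneSpectrum_factorization' K hI,
    ← finprod_heightOneSpectrum_factorization' K hJ]
  simp_rw [hcount]

end FractionalIdeal

theorem exists_pow_eq_of_pow_eq_pow_of_coprime {G : Type*} [CommGroupWithZero G] {ℓ d : ℕ}
    (hℓ : ℓ ≠ 0) (hcop : ℓ.Coprime d) {x y : G} (h : y ^ ℓ = x ^ d) : ∃ w : G, w ^ ℓ = x := by
  rcases eq_or_ne x 0 with rfl | hx
  · exact ⟨0, zero_pow hℓ⟩
  refine ⟨x ^ ℓ.gcdA d * y ^ ℓ.gcdB d, ?_⟩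
  have hbezout : (ℓ : ℤ) * ℓ.gcdA d + d * ℓ.gcdB d = 1 := by
    rw [← Nat.gcd_eq_gcd_ab, hcop, Nat.cast_one]
  calc (x ^ ℓ.gcdA d * y ^ ℓ.gcdB d) ^ ℓ
      = x ^ ((ℓ : ℤ) * ℓ.gcdA d) * (y ^ ℓ) ^ ℓ.gcdB d := by
        rw [mul_pow, ← zpow_natCast (x ^ _), ← zpow_natCast (y ^ _), ← zpow_natCast y, ← zpow_mul,
          ← zpow_mul, ← zpow_mul, mul_comm (ℓ.gcdA d), mul_comm (ℓ.gcdB d)]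
    _ = x ^ ((ℓ : ℤ) * ℓ.gcdA d + d * ℓ.gcdB d) := by
        rw [h, zpow_add₀ hx, ← zpow_natCast, ← zpow_mul]
    _ = x := by rw [hbezout, zpow_one]

theorem IsCyclotomicExtension.finrank_le_totient (n : ℕ) [NeZero n] (K L : Type*) [Field K]
    [Field L] [Algebra K L] [IsCyclotomicExtension {n} K L] :
    Module.finrank K L ≤ n.totient := by
  have := IsCyclotomicExtension.finiteDimensional {n} K L
  have := IsCyclotomicExtension.isGalois {n} K L
  rw [← IsGalois.card_aut_eq_finrank, ← ZMod.card_units_eq_totient, Nat.card_eq_fintype_card]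
  exact Fintype.card_le_of_injective _ ((zeta_spec n K L).autToPow_injective K)

theorem IsCyclotomicExtension.coprime_finrank_of_prime {p : ℕ} (hp : p.Prime) (K L : Type*)
    [Field K] [Field L] [Algebra K L] [IsCyclotomicExtension {p} K L] :
    p.Coprime (Module.finrank K L) :=
  have : NeZero p := ⟨hp.ne_zero⟩
  have := IsCyclotomicExtension.finiteDimensional {p} K L
  Nat.coprime_of_lt_prime Module.finrank_pos.ne'
    ((finrank_le_totient p K L).trans_lt (Nat.totient_lt p hp.one_lt)) hp

theorem stmt9_general {K : Type*} [Field K] [NumberField K] (ℓ : ℕ) (hℓ : ℓ.Prime)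
    (𝔞 : FractionalIdeal (nonZeroDivisors (𝓞 K)) K)
    (hnp : ¬ ((𝔞 : Submodule (𝓞 K) K).IsPrincipal))
    (α : K)
    (hpow : 𝔞 ^ ℓ = FractionalIdeal.spanSingleton (nonZeroDivisors (𝓞 K)) α)
    (M : Type*) [Field M] [Algebra K M]
    [IsCyclotomicExtension {ℓ} K M] :
    ¬ ∃ γ : M, γ ^ ℓ = algebraMap K M α := by
  rintro ⟨γ, hγ⟩
  have hnorm : Algebra.norm K γ ^ ℓ = α ^ Module.finrank K M := by
    rw [← map_pow, hγ, Algebra.norm_algebraMap]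
  obtain ⟨w, rfl⟩ := exists_pow_eq_of_pow_eq_pow_of_coprime hℓ.ne_zero
    (IsCyclotomicExtension.coprime_finrank_of_prime hℓ K M) hnorm
  have h𝔞 : 𝔞 = FractionalIdeal.spanSingleton _ w :=
    FractionalIdeal.pow_left_injective hℓ.ne_zero <| by
      simpa only [FractionalIdeal.spanSingleton_pow] using hpow
  exact hnp (h𝔞 ▸ ⟨⟨w, FractionalIdeal.coe_spanSingleton _ w⟩⟩)

/-- Let `ℓ` be an odd prime and `𝔞` a nonzero fractional ideal of a number field `K` whose
class in `Cl(K)` has order exactly `ℓ` (for `ℓ` prime: `𝔞` is not principal but `𝔞^ℓ = (α)`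
for some `α ∈ K^×`).  Then `α` is not an `ℓ`-th power in `K(μ_ℓ)^×`. -/
theorem stmt9 {K : Type*} [Field K] [NumberField K] (ℓ : ℕ) (hℓ : ℓ.Prime) (hodd : Odd ℓ)
    (𝔞 : FractionalIdeal (nonZeroDivisors (𝓞 K)) K) (h𝔞 : 𝔞 ≠ 0)
    (hnp : ¬ ((𝔞 : Submodule (𝓞 K) K).IsPrincipal))
    (α : K) (hα : α ≠ 0)
    (hpow : 𝔞 ^ ℓ = FractionalIdeal.spanSingleton (nonZeroDivisors (𝓞 K)) α)
    (M : Type*) [Field M] [Algebra K M]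
    [IsCyclotomicExtension {ℓ} K M] :
    ¬ ∃ γ : M, γ ^ ℓ = algebraMap K M α :=
  stmt9_general ℓ hℓ 𝔞 hnp α hpow M
end
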